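/- Let 1 ≤ p < q < ∞ and d ≥ 1. The Morrey space M^p_q(ℝ^d) is not uniformly non-octahedral: for every δ > 0 there exist F, K, U ∈ M^p_q with ‖F‖ = ‖K‖ = ‖U‖ = 1 such that ‖F ± K ± U‖ > 3(1 − δ) for all four choices of signs. -/

import Mathlib

open MeasureTheory Metric ENNReal

/-- The small Morrey norm: sup over centers `a` and radii `R ∈ (0,1)` of
`|B(a,R)|^(1/q-1/p) (∫_{B(a,R)} |f|^p)^(1/p)`, valued in `ℝ≥0∞`. -/
noncomputable def smallMorreyNorm (d : ℕ) (p q : ℝ)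
    (f : EuclideanSpace ℝ (Fin d) → ℝ) : ℝ≥0∞ :=
  ⨆ (a : EuclideanSpace ℝ (Fin d)) (R : ℝ) (_ : 0 < R) (_ : R < 1),
    volume (ball a R) ^ (1 / q - 1 / p) *
      (∫⁻ y in ball a R, ENNReal.ofReal (|f y| ^ p)) ^ (1 / p)

/-- The (classical) Morrey norm: sup over all centers `a` and radii `R > 0`. -/
noncomputable def morreyNorm (d : ℕ) (p q : ℝ)
    (f : EuclideanSpace ℝ (Fin d) → ℝ) : ℝ≥0∞ :=
  ⨆ (a : EuclideanSpace ℝ (Fin d)) (R : ℝ) (_ : 0 < R),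
    volume (ball a R) ^ (1 / q - 1 / p) *
      (∫⁻ y in ball a R, ENNReal.ofReal (|f y| ^ p)) ^ (1 / p)

/-!
Place unit balls `B_i` so far apart that no ball of radius below some `R₀` meets two of them,
where `R₀` is so large that, because `1/q - 1/p < 0`, the Morrey quotient of their union over
any ball of radius at least `R₀` is below that of a single `B_i`. Then every signed sum
`ε ∑ ±1_{B_i}` has Morrey norm `ε |B_1|^{1/q}`, which is `1` for a suitable `ε`. Index four such
balls by pairs of signs `(σ, τ)` and take `F = ε ∑ 1_B`, `K = ε ∑ σ 1_B`, `U = ε ∑ τ 1_B`: for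
signs `s, t` the function `F + sK + tU` equals `3ε` on the ball indexed by `(s, t)`, so its norm
is at least `3`.
-/

open Filter Topology Set Function

namespace ENNReal

theorem rpow_le_rpow_of_nonpos {a b : ℝ≥0∞} (hab : a ≤ b) {z : ℝ} (hz : z ≤ 0) :
    b ^ z ≤ a ^ z := by
  rw [← neg_neg z, rpow_neg b, rpow_neg a]
  exact ENNReal.inv_le_inv.2 (rpow_le_rpow hab (neg_nonneg.2 hz))

theorem rpow_sub_mul_rpow {x : ℝ≥0∞} (hx₀ : x ≠ 0) (hx : x ≠ ∞) (s t : ℝ) :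
    x ^ (s - t) * x ^ t = x ^ s := by
  rw [← rpow_add _ _ hx₀ hx, sub_add_cancel]

theorem ofReal_rpow_mul_rpow_inv {c p : ℝ} (hc : 0 ≤ c) (hp : 0 < p) (m : ℝ≥0∞) :
    (ENNReal.ofReal (c ^ p) * m) ^ (1 / p) = ENNReal.ofReal c * m ^ (1 / p) := by
  rw [mul_rpow_of_nonneg _ _ (by positivity), ofReal_rpow_of_nonneg (by positivity) (by positivity),
    ← Real.rpow_mul hc, mul_one_div_cancel hp.ne', Real.rpow_one]

theorem rpow_sub_mul_rpow_le {p q : ℝ} (hp : 0 < p) (hpq : p ≤ q) {v m ω : ℝ≥0∞}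
    (hv₀ : v ≠ 0) (hv : v ≠ ∞) (hω₀ : ω ≠ 0) (hω : ω ≠ ∞) (hmv : m ≤ v)
    (hmω : m ≤ ω) :
    v ^ (1 / q - 1 / p) * m ^ (1 / p) ≤ ω ^ (1 / q) := by
  have hq : 0 < q := hp.trans_le hpq
  rcases le_total v ω with hvω | hωv
  · calc v ^ (1 / q - 1 / p) * m ^ (1 / p) ≤ v ^ (1 / q - 1 / p) * v ^ (1 / p) := by gcongr
      _ = v ^ (1 / q) := rpow_sub_mul_rpow hv₀ hv _ _
      _ ≤ ω ^ (1 / q) := by gcongr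
  · have he : 1 / q - 1 / p ≤ 0 := sub_nonpos.2 (one_div_le_one_div_of_le hp hpq)
    calc v ^ (1 / q - 1 / p) * m ^ (1 / p) ≤ ω ^ (1 / q - 1 / p) * ω ^ (1 / p) :=
          mul_le_mul' (rpow_le_rpow_of_nonpos hωv he) (by gcongr)
      _ = ω ^ (1 / q) := rpow_sub_mul_rpow hω₀ hω _ _

end ENNReal

section Volume

variable {E : Type*} [NormedAddCommGroup E] [NormedSpace ℝ E] [FiniteDimensional ℝ E]
  [MeasurableSpace E] [BorelSpace E] [Nontrivial E] (μ : Measure E) [μ.IsAddHaarMeasure]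

theorem tendsto_measure_ball_atTop (x : E) : Tendsto (fun r => μ (ball x r)) atTop (𝓝 ∞) := by
  have hpow : Tendsto (fun r : ℝ => ENNReal.ofReal (r ^ Module.finrank ℝ E)) atTop (𝓝 ∞) :=
    tendsto_ofReal_atTop.comp (tendsto_pow_atTop Module.finrank_pos.ne')
  have hball := ENNReal.Tendsto.mul_const hpow
    (Or.inr (measure_ball_lt_top (μ := μ) (x := 0) (r := 1)).ne)
  rw [top_mul (measure_ball_pos μ 0 one_pos).ne'] at hball
  refine hball.congr' ?_
  filter_upwards [eventually_ge_atTop 0] with r hr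
  rw [Measure.addHaar_ball μ x hr]

theorem eventually_forall_measure_ball_rpow_mul_le {e : ℝ} (he : e < 0) {C B : ℝ≥0∞}
    (hC : C ≠ ∞) (hB : B ≠ 0) :
    ∀ᶠ R₀ in atTop, ∀ (a : E) (R : ℝ), R₀ ≤ R → μ (ball a R) ^ e * C ≤ B := by
  have hlim : Tendsto (fun r => μ (ball (0 : E) r) ^ e * C) atTop (𝓝 0) := by
    have := ENNReal.Tendsto.mul_const (((ENNReal.continuous_rpow_const (y := e)).tendsto ∞).comp
      (tendsto_measure_ball_atTop μ 0)) (Or.inr hC)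
    simpa [top_rpow_of_neg he] using this
  obtain ⟨R₀, hR₀⟩ := eventually_atTop.1 (hlim.eventually (eventually_le_nhds hB.bot_lt))
  filter_upwards [eventually_ge_atTop R₀] with R₁ hR₁ a R hR
  rw [Measure.addHaar_ball_center]
  exact hR₀ R (hR₁.trans hR)

end Volume

theorem exists_pairwise_le_dist (E ι : Type*) [NormedAddCommGroup E] [NormedSpace ℝ E]
    [Nontrivial E] [Countable ι] (D : ℝ) :
    ∃ c : ι → E, Pairwise fun i j => D ≤ dist (c i) (c j) := by
  obtain ⟨v, hv⟩ := exists_norm_eq E zero_le_one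
  obtain ⟨f, hf⟩ := Countable.exists_injective_nat ι
  refine ⟨fun i => ((f i : ℝ) * max D 0) • v, fun i j hij => ?_⟩
  have hfij : (1 : ℝ) ≤ |(f i : ℝ) - f j| := by
    exact_mod_cast Int.one_le_abs (sub_ne_zero.2 (Int.natCast_inj.not.2 (hf.ne hij)))
  dsimp only
  rw [dist_eq_norm, ← sub_smul, ← sub_mul, norm_smul, hv, mul_one, Real.norm_eq_abs, abs_mul,
    abs_of_nonneg (le_max_right D 0)]
  nlinarith [le_max_left D 0, le_max_right D 0]

theorem exists_inter_iUnion_ball_subset {α ι : Type*} [PseudoMetricSpace α] [Nonempty ι]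
    {c : ι → α} {r R : ℝ} (hc : Pairwise fun i j => 2 * R + 2 * r ≤ dist (c i) (c j))
    (a : α) :
    ∃ i, ball a R ∩ ⋃ j, ball (c j) r ⊆ ball (c i) r := by
  by_cases hne : (ball a R ∩ ⋃ j, ball (c j) r).Nonempty
  · obtain ⟨z, hza, hz⟩ := hne
    obtain ⟨i, hzi⟩ := mem_iUnion.1 hz
    refine ⟨i, fun w ⟨hwa, hw⟩ => ?_⟩
    obtain ⟨j, hwj⟩ := mem_iUnion.1 hw
    obtain rfl | hij := eq_or_ne i j
    · exact hwj
    rw [mem_ball] at hza hzi hwa hwj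
    have := dist_triangle4 (c i) z w (c j)
    have := dist_triangle z a w
    have := hc hij
    rw [dist_comm (c i) z, dist_comm a w] at *
    linarith
  · rw [not_nonempty_iff_eq_empty.1 hne]
    exact ⟨Classical.arbitrary ι, empty_subset _⟩

section Indicator

variable {α ι : Type*} [Fintype ι] {s : ι → Set α}

theorem sum_mul_indicator_one_of_mem (hs : Pairwise (Disjoint on s)) (w : ι → ℝ) {i : ι}
    {x : α} (hx : x ∈ s i) : ∑ j, w j * (s j).indicator 1 x = w i := by
  rw [Finset.sum_eq_single i (fun j _ hji => ?_) (by simp), indicator_of_mem hx, Pi.one_apply,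
    mul_one]
  rw [indicator_of_notMem ((hs hji.symm).notMem_of_mem_left hx), mul_zero]

theorem abs_sum_mul_indicator_one (hs : Pairwise (Disjoint on s)) {w : ι → ℝ}
    (hw : ∀ i, |w i| = 1) (x : α) :
    |∑ j, w j * (s j).indicator 1 x| = (⋃ i, s i).indicator 1 x := by
  by_cases hx : x ∈ ⋃ i, s i
  · obtain ⟨i, hi⟩ := mem_iUnion.1 hx
    rw [sum_mul_indicator_one_of_mem hs w hi, hw, indicator_of_mem hx, Pi.one_apply]
  · have hxs : ∀ j, x ∉ s j := fun j hj => hx (mem_iUnion.2 ⟨j, hj⟩)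
    simp [hxs, hx]

end Indicator

theorem setLIntegral_ofReal_abs_indicator_one_rpow {α : Type*} [MeasurableSpace α]
    (μ : Measure α) {S : Set α} (hS : MeasurableSet S) {p : ℝ} (hp : 0 < p) (B : Set α) :
    ∫⁻ y in B, ENNReal.ofReal (|S.indicator (1 : α → ℝ) y| ^ p) ∂μ = μ (S ∩ B) := by
  have hfun : (fun y => ENNReal.ofReal (|S.indicator (1 : α → ℝ) y| ^ p)) = S.indicator 1 := by
    ext y
    by_cases hy : y ∈ S <;> simp [hy, hp.ne']
  rw [hfun, lintegral_indicator_one hS, Measure.restrict_apply hS]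

section Morrey

variable {d : ℕ} {p q : ℝ}

theorem morreyNorm_congr_abs {f g : EuclideanSpace ℝ (Fin d) → ℝ} (h : ∀ x, |f x| = |g x|) :
    morreyNorm d p q f = morreyNorm d p q g := by
  simp only [morreyNorm, h]

theorem morreyNorm_const_mul (hp : 0 < p) (c : ℝ) (f : EuclideanSpace ℝ (Fin d) → ℝ) :
    morreyNorm d p q (fun x => c * f x) = ENNReal.ofReal |c| * morreyNorm d p q f := by
  simp only [morreyNorm, ENNReal.mul_iSup, abs_mul,
    Real.mul_rpow (abs_nonneg c) (abs_nonneg _), ENNReal.ofReal_mul (by positivity : 0 ≤ |c| ^ p)]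
  refine iSup_congr fun a => iSup_congr fun R => iSup_congr fun _ => ?_
  rw [lintegral_const_mul' _ _ ofReal_ne_top, ofReal_rpow_mul_rpow_inv (abs_nonneg c) hp]
  ring

theorem ofReal_mul_volume_ball_rpow_le_morreyNorm (hp : 0 < p)
    {f : EuclideanSpace ℝ (Fin d) → ℝ}
    {a : EuclideanSpace ℝ (Fin d)} {R c : ℝ} (hR : 0 < R) (hc : 0 ≤ c)
    (hf : ∀ y ∈ ball a R, c ≤ |f y|) :
    ENNReal.ofReal c * volume (ball a R) ^ (1 / q) ≤ morreyNorm d p q f := by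
  have hint : ENNReal.ofReal (c ^ p) * volume (ball a R) ≤
      ∫⁻ y in ball a R, ENNReal.ofReal (|f y| ^ p) := by
    rw [← setLIntegral_const]
    exact setLIntegral_mono' measurableSet_ball fun y hy =>
      ENNReal.ofReal_le_ofReal (Real.rpow_le_rpow hc (hf y hy) hp.le)
  calc ENNReal.ofReal c * volume (ball a R) ^ (1 / q)
      = volume (ball a R) ^ (1 / q - 1 / p) *
          (ENNReal.ofReal (c ^ p) * volume (ball a R)) ^ (1 / p) := by
        rw [ofReal_rpow_mul_rpow_inv hc hp, mul_left_comm,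
          rpow_sub_mul_rpow (measure_ball_pos _ _ hR).ne' measure_ball_lt_top.ne]
    _ ≤ volume (ball a R) ^ (1 / q - 1 / p) *
          (∫⁻ y in ball a R, ENNReal.ofReal (|f y| ^ p)) ^ (1 / p) := by gcongr
    _ ≤ morreyNorm d p q f := le_iSup_of_le a (le_iSup_of_le R (le_iSup_of_le hR le_rfl))

variable {ι : Type*} [Fintype ι] [Nonempty ι] {c : ι → EuclideanSpace ℝ (Fin d)}
  {R₀ : ℝ}

theorem morreyNorm_indicator_iUnion_ball_le (hp : 0 < p) (hpq : p ≤ q)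
    (hlarge : ∀ (a : EuclideanSpace ℝ (Fin d)) (R : ℝ), R₀ ≤ R →
      volume (ball a R) ^ (1 / q - 1 / p) *
          (Fintype.card ι * volume (ball (0 : EuclideanSpace ℝ (Fin d)) 1)) ^ (1 / p) ≤
        volume (ball (0 : EuclideanSpace ℝ (Fin d)) 1) ^ (1 / q))
    (hsep : Pairwise fun i j => 2 * R₀ + 2 ≤ dist (c i) (c j)) :
    morreyNorm d p q ((⋃ i, ball (c i) 1).indicator 1) ≤
      volume (ball (0 : EuclideanSpace ℝ (Fin d)) 1) ^ (1 / q) := by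
  set ω := volume (ball (0 : EuclideanSpace ℝ (Fin d)) 1)
  refine iSup_le fun a => iSup₂_le fun R hR => ?_
  rw [setLIntegral_ofReal_abs_indicator_one_rpow volume
    (MeasurableSet.iUnion fun _ => measurableSet_ball) hp]
  rcases le_or_gt R₀ R with hR₀ | hR₀
  · refine le_trans ?_ (hlarge a R hR₀)
    gcongr
    calc volume ((⋃ i, ball (c i) 1) ∩ ball a R) ≤ ∑ i, volume (ball (c i) 1) :=
          (measure_mono inter_subset_left).trans (measure_iUnion_fintype_le _ _)
      _ = Fintype.card ι * ω := by
        simp only [Measure.addHaar_ball_center volume (c _), Finset.sum_const, Finset.card_univ,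
          nsmul_eq_mul, ω]
  · obtain ⟨i, hi⟩ := exists_inter_iUnion_ball_subset
      (hsep.mono fun i j h => (by linarith : 2 * R + 2 * 1 ≤ dist (c i) (c j))) a
    refine rpow_sub_mul_rpow_le hp hpq (measure_ball_pos _ _ hR).ne' measure_ball_lt_top.ne
      (measure_ball_pos _ _ one_pos).ne' measure_ball_lt_top.ne
      (measure_mono inter_subset_right) ?_
    calc volume ((⋃ i, ball (c i) 1) ∩ ball a R) ≤ volume (ball (c i) 1) :=
          measure_mono (inter_comm _ _ ▸ hi)
      _ = ω := Measure.addHaar_ball_center _ _ _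

theorem morreyNorm_sum_mul_indicator_ball (hp : 0 < p) (hpq : p ≤ q) (hR₀ : 0 ≤ R₀)
    (hlarge : ∀ (a : EuclideanSpace ℝ (Fin d)) (R : ℝ), R₀ ≤ R →
      volume (ball a R) ^ (1 / q - 1 / p) *
          (Fintype.card ι * volume (ball (0 : EuclideanSpace ℝ (Fin d)) 1)) ^ (1 / p) ≤
        volume (ball (0 : EuclideanSpace ℝ (Fin d)) 1) ^ (1 / q))
    (hsep : Pairwise fun i j => 2 * R₀ + 2 ≤ dist (c i) (c j)) {w : ι → ℝ}
    (hw : ∀ i, |w i| = 1) :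
    morreyNorm d p q (fun x => ∑ i, w i * (ball (c i) 1).indicator 1 x) =
      volume (ball (0 : EuclideanSpace ℝ (Fin d)) 1) ^ (1 / q) := by
  have hdisj : Pairwise (Disjoint on fun i => ball (c i) 1) :=
    hsep.mono fun i j h => ball_disjoint_ball (by linarith)
  refine le_antisymm ?_ ?_
  · rw [morreyNorm_congr_abs (g := (⋃ i, ball (c i) 1).indicator 1) fun x => by
      rw [abs_sum_mul_indicator_one hdisj hw, abs_of_nonneg (indicator_nonneg (by simp) x)]]
    exact morreyNorm_indicator_iUnion_ball_le hp hpq hlarge hsep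
  · obtain ⟨i⟩ := ‹Nonempty ι›
    calc volume (ball (0 : EuclideanSpace ℝ (Fin d)) 1) ^ (1 / q)
        = ENNReal.ofReal 1 * volume (ball (c i) 1) ^ (1 / q) := by
          rw [ENNReal.ofReal_one, one_mul, Measure.addHaar_ball_center volume (c i)]
      _ ≤ _ := ofReal_mul_volume_ball_rpow_le_morreyNorm hp one_pos zero_le_one fun y hy => by
          rw [sum_mul_indicator_one_of_mem hdisj w hy, hw]

end Morrey

theorem exists_morreyNorm_sum_mul_indicator_ball_eq {d : ℕ} [NeZero d] {p q : ℝ} (hp : 0 < p)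
    (hpq : p < q) (ι : Type*) [Fintype ι] [Nonempty ι] :
    ∃ c : ι → EuclideanSpace ℝ (Fin d), Pairwise (Disjoint on fun i => ball (c i) 1) ∧
      ∀ w : ι → ℝ, (∀ i, |w i| = 1) →
        morreyNorm d p q (fun x => ∑ i, w i * (ball (c i) 1).indicator 1 x) =
          volume (ball (0 : EuclideanSpace ℝ (Fin d)) 1) ^ (1 / q) := by
  set ω := volume (ball (0 : EuclideanSpace ℝ (Fin d)) 1)
  have hC : ((Fintype.card ι : ℝ≥0∞) * ω) ^ (1 / p) ≠ ∞ :=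
    rpow_ne_top_of_nonneg (by positivity) (mul_ne_top (natCast_ne_top _) measure_ball_lt_top.ne)
  have hω : ω ^ (1 / q) ≠ 0 :=
    (rpow_pos (measure_ball_pos _ _ one_pos) measure_ball_lt_top.ne).ne'
  obtain ⟨R₀, hlarge, hR₀⟩ := ((eventually_forall_measure_ball_rpow_mul_le
    (volume : Measure (EuclideanSpace ℝ (Fin d)))
    (sub_neg.2 (one_div_lt_one_div_of_lt hp hpq)) hC hω).and (eventually_ge_atTop 0)).exists
  obtain ⟨c, hsep⟩ := exists_pairwise_le_dist (EuclideanSpace ℝ (Fin d)) ι (2 * R₀ + 2)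
  exact ⟨c, hsep.mono fun i j h => ball_disjoint_ball (by linarith),
    fun w hw => morreyNorm_sum_mul_indicator_ball hp hpq.le hR₀ hlarge hsep hw⟩

theorem abs_intCast_units (u : ℤˣ) : |((u : ℤ) : ℝ)| = 1 := by
  exact_mod_cast Int.isUnit_iff_abs_eq.1 u.isUnit

theorem intCast_units_mul_self (u : ℤˣ) : ((u : ℤ) : ℝ) * u = 1 := by
  rw [← Int.cast_mul, ← Units.val_mul, Int.units_mul_self, Units.val_one, Int.cast_one]

theorem exists_pos_ofReal_mul_eq_one {x : ℝ≥0∞} (hx₀ : x ≠ 0) (hx : x ≠ ∞) :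
    ∃ ε : ℝ, 0 < ε ∧ ENNReal.ofReal ε * x = 1 :=
  ⟨x.toReal⁻¹, inv_pos.2 (toReal_pos hx₀ hx), by
    rw [ofReal_inv_of_pos (toReal_pos hx₀ hx), ofReal_toReal hx,
      ENNReal.inv_mul_cancel hx₀ hx]⟩

theorem exists_units_intCast_eq {s : ℝ} (hs : s = 1 ∨ s = -1) :
    ∃ u : ℤˣ, ((u : ℤ) : ℝ) = s := by
  rcases hs with rfl | rfl
  exacts [⟨1, by simp⟩, ⟨-1, by simp⟩]

/-- the Morrey space is not uniformly non-octahedral: for every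
`δ > 0` there are `F, K, U` of Morrey norm 1 with `‖F ± K ± U‖ > 3(1-δ)` for all
four choices of signs. -/
theorem morrey_not_uniformly_nonOctahedral (d : ℕ) (p q : ℝ) (hp : 1 ≤ p)
    (hpq : p < q) (hd : 1 ≤ d) :
    ∀ δ : ℝ, 0 < δ →
      ∃ F K U : EuclideanSpace ℝ (Fin d) → ℝ,
        morreyNorm d p q F = 1 ∧ morreyNorm d p q K = 1 ∧ morreyNorm d p q U = 1 ∧
          ∀ s t : ℝ, (s = 1 ∨ s = -1) → (t = 1 ∨ t = -1) →
            ENNReal.ofReal (3 * (1 - δ)) <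
              morreyNorm d p q (fun x => F x + s * K x + t * U x) := by
  intro δ hδ
  have hp₀ : 0 < p := by linarith
  have : NeZero d := ⟨by omega⟩
  obtain ⟨c, hdisj, hnorm⟩ :=
    exists_morreyNorm_sum_mul_indicator_ball_eq (d := d) hp₀ hpq (ℤˣ × ℤˣ)
  obtain ⟨ε, hε₀, hε⟩ := exists_pos_ofReal_mul_eq_one
    (x := volume (ball (0 : EuclideanSpace ℝ (Fin d)) 1) ^ (1 / q))
    (rpow_pos (measure_ball_pos _ _ one_pos) measure_ball_lt_top.ne).ne'
    (rpow_ne_top_of_nonneg (one_div_nonneg.2 (by linarith)) measure_ball_lt_top.ne)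
  let bump (w : ℤˣ × ℤˣ → ℝ) (x : EuclideanSpace ℝ (Fin d)) : ℝ :=
    ε * ∑ i, w i * (ball (c i) 1).indicator 1 x
  have hbump (w) (hw : ∀ i, |w i| = 1) : morreyNorm d p q (bump w) = 1 := by
    rw [morreyNorm_const_mul hp₀, hnorm w hw, abs_of_pos hε₀, hε]
  refine ⟨bump 1, bump fun i => (i.1 : ℤ), bump fun i => (i.2 : ℤ), hbump _ (by simp),
    hbump _ fun i => abs_intCast_units i.1, hbump _ fun i => abs_intCast_units i.2,
    fun s t hs ht => ?_⟩
  obtain ⟨u, rfl⟩ := exists_units_intCast_eq hs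
  obtain ⟨v, rfl⟩ := exists_units_intCast_eq ht
  have hlower : ∀ y ∈ ball (c (u, v)) 1, 3 * ε ≤ |bump 1 y + u * bump (fun i => (i.1 : ℤ)) y +
      v * bump (fun i => (i.2 : ℤ)) y| := fun y hy => by
    simp only [bump, sum_mul_indicator_one_of_mem hdisj _ hy, Pi.one_apply]
    exact le_abs.2 (Or.inl (le_of_eq (by
      linear_combination -ε * intCast_units_mul_self u - ε * intCast_units_mul_self v)))
  calc ENNReal.ofReal (3 * (1 - δ)) < ENNReal.ofReal 3 :=
        (ofReal_lt_ofReal_iff zero_lt_three).2 (by linarith)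
    _ = ENNReal.ofReal (3 * ε) * volume (ball (c (u, v)) 1) ^ (1 / q) := by
        rw [Measure.addHaar_ball_center, ofReal_mul zero_le_three, mul_assoc, hε, mul_one]
    _ ≤ _ := ofReal_mul_volume_ball_rpow_le_morreyNorm hp₀ one_pos (by linarith) hlower
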